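/- Assume W is finite with longest element w₀. For every x ∈ W, the element P_x H_{w₀}⁻¹ is self-dual under the bar involution d; equivalently, P_x = C^x H_{w₀} for some bar-invariant C^x. -/

import Mathlib

open LaurentPolynomial

/-- Membership in `v ℤ[v] ⊆ ℤ[v,v⁻¹]`. -/
def IsVPol (p : LaurentPolynomial ℤ) : Prop :=
  ∃ q : Polynomial ℤ, p = Polynomial.toLaurent q * T 1

/-- The coefficient of `v` in a Laurent polynomial. -/
def muCoeff (p : LaurentPolynomial ℤ) : ℤ := p.coeff 1

variable {B W : Type*} [Group W] {M : CoxeterMatrix B}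

/-- The Bruhat order `≤` on `W`: generated by right multiplication by reflections which
increases the length. -/
def BruhatLE (cs : CoxeterSystem M W) : W → W → Prop :=
  Relation.ReflTransGen
    (fun a b => (∃ t, cs.IsReflection t ∧ b = a * t) ∧ cs.length a < cs.length b)

/-- The strict Bruhat order on `W`. -/
def BruhatLT (cs : CoxeterSystem M W) (x y : W) : Prop :=
  BruhatLE cs x y ∧ x ≠ y

/-- The Hecke algebra of a Coxeter system, axiomatized: a `ℤ[v,v⁻¹]`-algebra with a basis
`T_x` indexed by `W` satisfying the braid and quadratic relations. -/
structure HeckeAlg (cs : CoxeterSystem M W) (A : Type*) [Ring A]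
    [Algebra (LaurentPolynomial ℤ) A] where
  Tb : Module.Basis W (LaurentPolynomial ℤ) A
  Tb_one : Tb 1 = 1
  Tb_mul : ∀ x y : W, cs.length (x * y) = cs.length x + cs.length y →
    Tb x * Tb y = Tb (x * y)
  Tb_quadratic : ∀ i : B, (Tb (cs.simple i) + 1) *
    (Tb (cs.simple i) - algebraMap (LaurentPolynomial ℤ) A (T (-2))) = 0

namespace HeckeAlg

variable {cs : CoxeterSystem M W} {A : Type*} [Ring A] [Algebra (LaurentPolynomial ℤ) A]

/-- The standard basis element `H_x = v^{ℓ(x)} T_x`. -/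
noncomputable def H (ha : HeckeAlg cs A) (x : W) : A :=
  algebraMap (LaurentPolynomial ℤ) A (T (cs.length x : ℤ)) * ha.Tb x

/-- The element `C_s = H_s + v` for a simple reflection `s`. -/
noncomputable def Cs (ha : HeckeAlg cs A) (i : B) : A :=
  ha.H (cs.simple i) + algebraMap (LaurentPolynomial ℤ) A (T 1)

/-- Data of the bar involution `d` on the Hecke algebra: a ring endomorphism with
`d(v) = v⁻¹` and `d(H_x) = (H_{x⁻¹})⁻¹`. -/
structure Bar (ha : HeckeAlg cs A) where
  d : A →+* A
  d_scalar : ∀ n : ℤ, d (algebraMap (LaurentPolynomial ℤ) A (T n)) =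
    algebraMap (LaurentPolynomial ℤ) A (T (-n))
  d_H_mul : ∀ x : W, d (ha.H x) * ha.H x⁻¹ = 1
  d_H_mul' : ∀ x : W, ha.H x⁻¹ * d (ha.H x) = 1

/-- `c` is a Kazhdan–Lusztig basis element at `x`: bar-invariant and congruent to `H_x`
modulo `∑_y v ℤ[v] H_y`. -/
def IsKL (ha : HeckeAlg cs A) (bar : ha.Bar) (x : W) (c : A) : Prop :=
  bar.d c = c ∧ ∃ f : W →₀ LaurentPolynomial ℤ, (∀ y, IsVPol (f y)) ∧
    c = ha.H x + f.sum fun y r => r • ha.H y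

end HeckeAlg

open scoped Classical
open HeckeAlg

/-! Let `ι` be the anti-involution `H_x ↦ H_{x⁻¹}` and `τ` the coefficient of `H_1`, so that the
form is `⟨a, b⟩ = τ(ι(a) b)`. Since `ℓ(w₀x) + ℓ(x⁻¹) = ℓ(w₀)`, we have `H_{w₀} d(H_x) = H_{w₀x}`,
and hence `τ(H_{w₀}² d(h)) = \overline{τ(h)}`. As `d` commutes with `ι` and `ι` fixes `H_{w₀}`,
this gives `⟨d(P_x) H_{w₀}², C_y⟩ = \overline{⟨P_x, C_y⟩} = δ_{xy}` because `d(C_y) = C_y`. Pairing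
against the Kazhdan–Lusztig basis is injective (it is unitriangular modulo `v ℤ[v]`), so
`P_x = d(P_x) H_{w₀}²`, i.e. `P_x H_{w₀}⁻¹ = d(P_x) H_{w₀}` is self-dual.

The identity `ℓ(x) + ℓ(x⁻¹w₀) = ℓ(w₀)` comes from counting right inversions: they are detected
by the cocycle of the action of `W` on `W × {±1}` lifting `(t, ε) ↦ (s t s, ±ε)`, and `w₀` has
every reflection as a right inversion. -/

theorem IsVPol.coeff_mul_eq_zero {r g : ℤ[T;T⁻¹]} (hr : IsVPol r) {ν : ℤ}
    (hg : ∀ m < ν, g.coeff m = 0) : (r * g).coeff ν = 0 := by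
  obtain ⟨q, rfl⟩ := hr
  induction q using Polynomial.induction_on' with
  | add p q hp hq =>
    rw [map_add, add_mul, add_mul, AddMonoidAlgebra.coeff_add, Finsupp.add_apply, hp, hq, add_zero]
  | monomial n a =>
    rw [Polynomial.toLaurent_C_mul_T, mul_assoc (C a), ← T_add, ← single_eq_C_mul_T,
      AddMonoidAlgebra.coeff_single_mul_apply, hg _ (by omega), mul_zero]

theorem eq_zero_of_unitriangular_isVPol {ι : Type*} {g : ι →₀ ℤ[T;T⁻¹]} {f : ι → ι →₀ ℤ[T;T⁻¹]}
    (hf : ∀ y z, IsVPol (f y z)) (h : ∀ y, g y + (f y).sum (fun z r => r * g z) = 0) : g = 0 := by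
  -- the lowest power of `v` in the coordinates of `g` cannot cancel, since `f y z ∈ v ℤ[v]`
  by_contra hg
  set S : Finset ℤ := g.support.biUnion fun z => (g z).coeff.support
  have hS : S.Nonempty := by
    obtain ⟨z, hz⟩ := Finsupp.support_nonempty_iff.mpr hg
    obtain ⟨m, hm⟩ := Finsupp.support_nonempty_iff.mpr
      (AddMonoidAlgebra.coeff_eq_zero.not.mpr (Finsupp.mem_support_iff.mp hz))
    exact ⟨m, Finset.mem_biUnion.mpr ⟨z, hz, hm⟩⟩
  have hbelow : ∀ z, ∀ m < S.min' hS, (g z).coeff m = 0 := by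
    intro z m hm
    by_contra hne
    have hz : g z ≠ 0 := by rintro hz; simp [hz] at hne
    exact absurd (S.min'_le m (Finset.mem_biUnion.mpr ⟨z, Finsupp.mem_support_iff.mpr hz,
      Finsupp.mem_support_iff.mpr hne⟩)) (not_le.mpr hm)
  obtain ⟨y, -, hy⟩ := Finset.mem_biUnion.mp (S.min'_mem hS)
  have hsum : ((f y).sum fun z r => r * g z).coeff (S.min' hS) = 0 := by
    rw [Finsupp.sum, AddMonoidAlgebra.coeff_sum, Finsupp.finsetSum_apply]
    exact Finset.sum_eq_zero fun z _ => (hf y z).coeff_mul_eq_zero (hbelow z)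
  have hcoeff := congrArg (fun p => p.coeff (S.min' hS)) (h y)
  simp only [AddMonoidAlgebra.coeff_add, Finsupp.add_apply, hsum, add_zero] at hcoeff
  exact Finsupp.mem_support_iff.mp hy (by simpa using hcoeff)

namespace CoxeterSystem

variable (cs : CoxeterSystem M W)

theorem reverse_alternatingWord_two_mul (i i' : B) (m : ℕ) :
    (alternatingWord i i' (2 * m)).reverse = alternatingWord i' i (2 * m) := by
  induction m with
  | zero => rfl
  | succ m ih =>
    rw [show 2 * (m + 1) = 2 * m + 1 + 1 by ring, alternatingWord_succ, alternatingWord_succ,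
      alternatingWord_succ', alternatingWord_succ']
    simp [ih]

theorem prod_map_alternatingWord_two_mul {G : Type*} [Monoid G] (f : B → G) (i i' : B) (m : ℕ) :
    ((alternatingWord i i' (2 * m)).map f).prod = (f i * f i') ^ m := by
  induction m with
  | zero => simp [alternatingWord]
  | succ m ih =>
    rw [show 2 * (m + 1) = 2 * m + 1 + 1 by ring, alternatingWord_succ', alternatingWord_succ']
    simp [ih, pow_succ', mul_assoc]

theorem even_count_rightInvSeq_alternatingWord (i i' : B) (t : W) :
    Even ((cs.rightInvSeq (alternatingWord i i' (2 * M i i'))).count t) := by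
  set m := M i i'
  set L := cs.leftInvSeq (alternatingWord i' i (2 * m))
  have hL : ∀ k (hk : k < 2 * m), L[k]'(by simpa [L] using hk) =
      cs.simple i' * (cs.simple i * cs.simple i') ^ k := by
    intro k hk
    rw [cs.getElem_leftInvSeq_alternatingWord i' i m k hk, prod_alternatingWord_eq_mul_pow]
    simp [show (2 * k + 1) / 2 = k by omega]
  have hlen : L.length = 2 * m := by simp [L]
  have hperiodic : L.drop m = L.take m := by
    refine List.ext_getElem (by simp [hlen]; omega) fun k h₁ h₂ => ?_
    simp only [List.getElem_drop, List.getElem_take]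
    rw [hL _ (by simp [hlen] at h₁; omega), hL _ (by simp [hlen] at h₂; omega), pow_add,
      cs.simple_mul_simple_pow, one_mul]
  have hcount : L.count t = 2 * (L.take m).count t := by
    conv_lhs => rw [← List.take_append_drop m L, List.count_append, hperiodic]
    ring
  rw [← List.count_reverse, ← leftInvSeq_reverse, reverse_alternatingWord_two_mul, hcount]
  exact even_two_mul _

noncomputable def signedConjFun (i : B) (p : W × ℤˣ) : W × ℤˣ :=
  (cs.simple i * p.1 * cs.simple i, if p.1 = cs.simple i then -p.2 else p.2)

theorem signedConjFun_involutive (i : B) : Function.Involutive (cs.signedConjFun i) := by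
  rintro ⟨t, ε⟩
  have hconj : cs.simple i * t * cs.simple i = cs.simple i ↔ t = cs.simple i := by
    constructor
    · intro h
      simpa [mul_assoc] using congrArg (fun u => cs.simple i * u * cs.simple i) h
    · rintro rfl
      simp
  simp only [signedConjFun, hconj]
  ext
  · simp [← mul_assoc]
  · split_ifs <;> simp

noncomputable def signedConj (i : B) : Equiv.Perm (W × ℤˣ) :=
  (cs.signedConjFun_involutive i).toPerm

theorem prod_map_signedConj_apply (ω : List B) (t : W) (ε : ℤˣ) :
    (ω.map cs.signedConj).prod (t, ε) =
      (cs.wordProd ω * t * (cs.wordProd ω)⁻¹, (-1) ^ (cs.rightInvSeq ω).count t * ε) := by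
  induction ω with
  | nil => simp
  | cons i ω ih =>
    have hcond : cs.wordProd ω * t * (cs.wordProd ω)⁻¹ = cs.simple i ↔
        (cs.wordProd ω)⁻¹ * cs.simple i * cs.wordProd ω = t := by
      constructor <;> intro h
      · rw [← h]; group
      · rw [← h]; group
    rw [List.map_cons, List.prod_cons, Equiv.Perm.mul_apply, ih]
    simp only [signedConj, Function.Involutive.coe_toPerm, signedConjFun, hcond, rightInvSeq,
      List.count_cons, beq_iff_eq, wordProd_cons, mul_inv_rev, inv_simple]
    ext
    · simp [mul_assoc]
    · split_ifs <;> simp [pow_succ]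

theorem isLiftable_signedConj : M.IsLiftable cs.signedConj := by
  intro i i'
  rw [← prod_map_alternatingWord_two_mul]
  ext ⟨t, ε⟩ : 1
  have hprod : cs.wordProd (alternatingWord i i' (2 * M i i')) = 1 := by
    rw [wordProd, prod_map_alternatingWord_two_mul, cs.simple_mul_simple_pow]
  rw [prod_map_signedConj_apply, hprod,
    (cs.even_count_rightInvSeq_alternatingWord i i' t).neg_one_pow]
  simp

noncomputable def signedConjRep : W →* Equiv.Perm (W × ℤˣ) :=
  cs.lift ⟨cs.signedConj, cs.isLiftable_signedConj⟩

theorem signedConjRep_wordProd (ω : List B) :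
    cs.signedConjRep (cs.wordProd ω) = (ω.map cs.signedConj).prod := by
  rw [wordProd, map_list_prod, List.map_map]
  congr 1
  exact List.map_congr_left fun i _ => cs.lift_apply_simple _ i

noncomputable def inversionSign (w t : W) : ℤˣ := (cs.signedConjRep w (t, 1)).2

theorem inversionSign_wordProd (ω : List B) (t : W) :
    cs.inversionSign (cs.wordProd ω) t = (-1) ^ (cs.rightInvSeq ω).count t := by
  rw [inversionSign, signedConjRep_wordProd, prod_map_signedConj_apply, mul_one]

theorem signedConjRep_apply (w t : W) (ε : ℤˣ) :
    cs.signedConjRep w (t, ε) = (w * t * w⁻¹, cs.inversionSign w t * ε) := by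
  obtain ⟨ω, rfl⟩ := cs.wordProd_surjective w
  rw [signedConjRep_wordProd, prod_map_signedConj_apply, inversionSign_wordProd]

theorem inversionSign_mul (u v t : W) :
    cs.inversionSign (u * v) t = cs.inversionSign u (v * t * v⁻¹) * cs.inversionSign v t := by
  have h := congrArg (fun p => (p (t, 1)).2) (map_mul cs.signedConjRep u v)
  simp only [Equiv.Perm.mul_apply, signedConjRep_apply, mul_one] at h
  exact h

theorem inversionSign_one (t : W) : cs.inversionSign 1 t = 1 := by
  simpa using cs.inversionSign_wordProd [] t

theorem inversionSign_self {t : W} (ht : cs.IsReflection t) : cs.inversionSign t t = -1 := by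
  obtain ⟨u, i, rfl⟩ := ht
  set t := u * cs.simple i * u⁻¹
  have hsimple : cs.inversionSign (cs.simple i) (cs.simple i) = -1 := by
    simpa using cs.inversionSign_wordProd [i] (cs.simple i)
  have hconj : u⁻¹ * t * u⁻¹⁻¹ = cs.simple i := by simp [t, mul_assoc]
  have hconj' : cs.simple i * u⁻¹ * t * (cs.simple i * u⁻¹)⁻¹ = cs.simple i := by
    simp [t, mul_assoc]
  have hcancel := cs.inversionSign_mul u u⁻¹ t
  rw [mul_inv_cancel, inversionSign_one, hconj] at hcancel
  calc cs.inversionSign t t = cs.inversionSign (u * (cs.simple i * u⁻¹)) t := by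
        rw [← mul_assoc]
    _ = cs.inversionSign (cs.simple i) (cs.simple i) *
          (cs.inversionSign u (cs.simple i) * cs.inversionSign u⁻¹ t) := by
        rw [inversionSign_mul, inversionSign_mul, hconj, hconj', mul_left_comm]
    _ = -1 := by rw [← hcancel, hsimple, mul_one]

theorem mem_rightInvSeq_of_inversionSign_eq_neg_one {ω : List B} {t : W}
    (h : cs.inversionSign (cs.wordProd ω) t = -1) : t ∈ cs.rightInvSeq ω := by
  rw [inversionSign_wordProd] at h
  refine List.count_pos_iff.mp (Nat.pos_of_ne_zero fun h0 => ?_)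
  rw [h0, pow_zero] at h
  exact absurd h (by decide)

theorem isRightInversion_of_inversionSign_eq_neg_one {w t : W}
    (h : cs.inversionSign w t = -1) : cs.IsRightInversion w t := by
  obtain ⟨ω, hω, rfl⟩ := cs.exists_isReduced w
  exact cs.isRightInversion_of_mem_rightInvSeq hω (cs.mem_rightInvSeq_of_inversionSign_eq_neg_one h)

theorem inversionSign_eq_neg_one_iff {w t : W} :
    cs.inversionSign w t = -1 ↔ cs.IsRightInversion w t := by
  refine ⟨cs.isRightInversion_of_inversionSign_eq_neg_one, fun ⟨ht, hlt⟩ => ?_⟩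
  by_contra hne
  have hcocycle := cs.inversionSign_mul (w * t) t t
  rw [show w * t * t = w by rw [mul_assoc, ht.mul_self, mul_one],
    show t * t * t⁻¹ = t by group, inversionSign_self cs ht,
    (Int.units_eq_one_or _).resolve_right hne] at hcocycle
  have hlt' := (cs.isRightInversion_of_inversionSign_eq_neg_one
    (by simpa using congrArg Neg.neg hcocycle.symm)).2
  rw [mul_assoc, ht.mul_self, mul_one] at hlt'
  omega

/-- The strong exchange condition. -/
theorem mem_rightInvSeq_of_isRightInversion {ω : List B} {t : W}
    (h : cs.IsRightInversion (cs.wordProd ω) t) : t ∈ cs.rightInvSeq ω :=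
  cs.mem_rightInvSeq_of_inversionSign_eq_neg_one (cs.inversionSign_eq_neg_one_iff.mpr h)

theorem setOf_isRightInversion_wordProd {ω : List B} (hω : cs.IsReduced ω) :
    {t | cs.IsRightInversion (cs.wordProd ω) t} = (cs.rightInvSeq ω).toFinset := by
  ext t
  simpa using ⟨cs.mem_rightInvSeq_of_isRightInversion, cs.isRightInversion_of_mem_rightInvSeq hω⟩

theorem finite_setOf_isRightInversion (w : W) : {t | cs.IsRightInversion w t}.Finite := by
  obtain ⟨ω, hω, rfl⟩ := cs.exists_isReduced w
  rw [cs.setOf_isRightInversion_wordProd hω]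
  exact Finset.finite_toSet _

theorem length_eq_ncard_setOf_isRightInversion (w : W) :
    cs.length w = {t | cs.IsRightInversion w t}.ncard := by
  obtain ⟨ω, hω, rfl⟩ := cs.exists_isReduced w
  rw [cs.setOf_isRightInversion_wordProd hω, Set.ncard_coe_finset,
    List.toFinset_card_of_nodup hω.nodup_rightInvSeq, length_rightInvSeq, hω.eq]

theorem length_add_length_of_mul_eq {w₀ : W} (hw₀ : ∀ u, cs.length u ≤ cs.length w₀)
    {x y : W} (hxy : x * y = w₀) : cs.length x + cs.length y = cs.length w₀ := by
  -- the right inversions of `w₀` are those of `y` together with the `y⁻¹ t y` for the right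
  -- inversions `t` of `x`, disjointly because every reflection is a right inversion of `w₀`
  have hw₀_inv : ∀ t, cs.IsReflection t → cs.inversionSign w₀ t = -1 := fun t ht =>
    cs.inversionSign_eq_neg_one_iff.mpr ⟨ht, lt_of_le_of_ne (hw₀ _) (ht.length_mul_left_ne w₀)⟩
  have hconj : Function.Injective fun t => y * t * y⁻¹ := fun a b h => by simpa using h
  have hexcl : ∀ t, cs.inversionSign y t = -1 → cs.inversionSign x (y * t * y⁻¹) ≠ -1 := by
    intro t hy hx
    have := hw₀_inv t (cs.isRightInversion_of_inversionSign_eq_neg_one hy).1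
    rw [← hxy, inversionSign_mul, hx, hy] at this
    exact absurd this (by decide)
  have hdisj : Disjoint {t | cs.IsRightInversion y t}
      ((fun t => y * t * y⁻¹) ⁻¹' {t | cs.IsRightInversion x t}) :=
    Set.disjoint_left.mpr fun t hy hx => hexcl t (cs.inversionSign_eq_neg_one_iff.mpr hy)
      (cs.inversionSign_eq_neg_one_iff.mpr hx)
  have hunion : {t | cs.IsRightInversion w₀ t} =
      {t | cs.IsRightInversion y t} ∪ (fun t => y * t * y⁻¹) ⁻¹' {t | cs.IsRightInversion x t} := by
    ext t
    have := hexcl t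
    simp only [Set.mem_union, Set.mem_ofPred_eq, Set.mem_preimage,
      ← inversionSign_eq_neg_one_iff, ← hxy, inversionSign_mul] at this ⊢
    rcases Int.units_eq_one_or (cs.inversionSign x (y * t * y⁻¹)) with h | h <;>
    rcases Int.units_eq_one_or (cs.inversionSign y t) with h' | h' <;> simp_all
  rw [length_eq_ncard_setOf_isRightInversion, length_eq_ncard_setOf_isRightInversion,
    length_eq_ncard_setOf_isRightInversion, hunion,
    Set.ncard_union_eq hdisj (cs.finite_setOf_isRightInversion y)
      ((cs.finite_setOf_isRightInversion x).preimage hconj.injOn),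
    Set.ncard_preimage_of_injective_subset_range hconj ?_, add_comm]
  exact fun t _ => ⟨y⁻¹ * t * y, by simp [mul_assoc]⟩

theorem mul_self_eq_one_of_forall_length_le {w₀ : W} (hw₀ : ∀ u, cs.length u ≤ cs.length w₀) :
    w₀ * w₀ = 1 := by
  have h := cs.length_add_length_of_mul_eq hw₀ (x := w₀⁻¹) (y := w₀ * w₀) (by group)
  rwa [length_inv, add_eq_left, length_eq_zero_iff] at h

theorem simple_induction_left_of_not_isLeftDescent {p : W → Prop} (one : p 1)
    (mul_simple_left : ∀ w i, ¬cs.IsLeftDescent w i → p w → p (cs.simple i * w)) (w : W) :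
    p w := by
  induction h : cs.length w using Nat.strong_induction_on generalizing w with
  | _ n ih =>
    by_cases hw : w = 1
    · exact hw ▸ one
    obtain ⟨i, hi⟩ := cs.exists_leftDescent_of_ne_one hw
    have hlt : cs.length (cs.simple i * w) < n := h ▸ hi
    simpa using mul_simple_left _ i (cs.isLeftDescent_iff_not_isLeftDescent_mul.mp hi)
      (ih _ hlt _ rfl)

end CoxeterSystem

namespace HeckeAlg

variable {cs : CoxeterSystem M W} {A : Type*} [Ring A] [Algebra ℤ[T;T⁻¹] A] (ha : HeckeAlg cs A)

theorem H_eq_smul (x : W) : ha.H x = (T (cs.length x : ℤ) : ℤ[T;T⁻¹]) • ha.Tb x :=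
  (Algebra.smul_def _ _).symm

noncomputable def basisH : Module.Basis W ℤ[T;T⁻¹] A :=
  ha.Tb.unitsSMul fun x => (isUnit_T (cs.length x : ℤ)).unit

@[simp]
theorem basisH_apply (x : W) : ha.basisH x = ha.H x := by
  rw [basisH, Module.Basis.unitsSMul_apply, H_eq_smul, Units.smul_def, IsUnit.unit_spec]

@[simp]
theorem H_one : ha.H 1 = 1 := by
  simp [H_eq_smul, ha.Tb_one]

theorem H_mul_H {x y : W} (h : cs.length (x * y) = cs.length x + cs.length y) :
    ha.H x * ha.H y = ha.H (x * y) := by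
  rw [H_eq_smul, H_eq_smul, H_eq_smul, smul_mul_smul_comm, ← T_add, ha.Tb_mul x y h, h]
  push_cast
  rfl

theorem H_simple_mul_self (i : B) :
    ha.H (cs.simple i) * ha.H (cs.simple i) =
      1 + (T (-1) - T 1 : ℤ[T;T⁻¹]) • ha.H (cs.simple i) := by
  have hsq : ha.Tb (cs.simple i) * ha.Tb (cs.simple i) =
      (T (-2) - 1 : ℤ[T;T⁻¹]) • ha.Tb (cs.simple i) + (T (-2) : ℤ[T;T⁻¹]) • 1 := by
    have hcomm := Algebra.commutes (T (-2) : ℤ[T;T⁻¹]) (ha.Tb (cs.simple i))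
    rw [sub_smul, one_smul, Algebra.smul_def, Algebra.smul_def, mul_one]
    calc ha.Tb (cs.simple i) * ha.Tb (cs.simple i)
        = (ha.Tb (cs.simple i) + 1) * (ha.Tb (cs.simple i) - algebraMap _ A (T (-2))) +
          (ha.Tb (cs.simple i) * algebraMap _ A (T (-2)) - ha.Tb (cs.simple i)) +
          algebraMap _ A (T (-2)) := by noncomm_ring
      _ = _ := by rw [ha.Tb_quadratic i, ← hcomm]; noncomm_ring
  rw [H_eq_smul, cs.length_simple, smul_mul_smul_comm, hsq, smul_add, smul_smul, smul_smul,
    smul_smul, mul_sub, sub_mul, ← T_add, ← T_add, ← T_add, ← T_add, add_comm]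
  norm_num

theorem H_simple_mul_H_of_not_isLeftDescent {y : W} {i : B} (h : ¬cs.IsLeftDescent y i) :
    ha.H (cs.simple i) * ha.H y = ha.H (cs.simple i * y) :=
  ha.H_mul_H (by rw [cs.length_simple, (cs.not_isLeftDescent_iff).mp h, add_comm])

theorem H_mul_H_simple_of_not_isRightDescent {y : W} {i : B} (h : ¬cs.IsRightDescent y i) :
    ha.H y * ha.H (cs.simple i) = ha.H (y * cs.simple i) :=
  ha.H_mul_H (by rw [cs.length_simple, (cs.not_isRightDescent_iff).mp h])

theorem H_simple_mul_H_of_isLeftDescent {y : W} {i : B} (h : cs.IsLeftDescent y i) :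
    ha.H (cs.simple i) * ha.H y =
      ha.H (cs.simple i * y) + (T (-1) - T 1 : ℤ[T;T⁻¹]) • ha.H y := by
  have hy : ha.H (cs.simple i) * ha.H (cs.simple i * y) = ha.H y := by
    simpa using ha.H_simple_mul_H_of_not_isLeftDescent
      (cs.isLeftDescent_iff_not_isLeftDescent_mul.mp h)
  rw [← hy, ← mul_assoc, H_simple_mul_self, add_mul, one_mul, smul_mul_assoc]

theorem H_mul_H_simple_of_isRightDescent {y : W} {i : B} (h : cs.IsRightDescent y i) :
    ha.H y * ha.H (cs.simple i) =
      ha.H (y * cs.simple i) + (T (-1) - T 1 : ℤ[T;T⁻¹]) • ha.H y := by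
  have hy : ha.H (y * cs.simple i) * ha.H (cs.simple i) = ha.H y := by
    simpa using ha.H_mul_H_simple_of_not_isRightDescent
      (cs.isRightDescent_iff_not_isRightDescent_mul.mp h)
  rw [← hy, mul_assoc, H_simple_mul_self, mul_add, mul_one, mul_smul_comm]

noncomputable def tau : A →ₗ[ℤ[T;T⁻¹]] ℤ[T;T⁻¹] := ha.basisH.coord 1

theorem tau_H (x : W) : ha.tau (ha.H x) = if x = 1 then 1 else 0 := by
  rw [tau, ← basisH_apply, Module.Basis.coord_apply, Module.Basis.repr_self,
    Finsupp.single_apply, eq_comm]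

theorem tau_H_mul_H (x y : W) : ha.tau (ha.H x * ha.H y) = if x * y = 1 then 1 else 0 := by
  induction y using cs.simple_induction_left_of_not_isLeftDescent generalizing x with
  | one => simp [tau_H]
  | mul_simple_left y i hy ih =>
    rw [← ha.H_simple_mul_H_of_not_isLeftDescent hy, ← mul_assoc]
    by_cases hx : cs.IsRightDescent x i
    · have hxy : x * y ≠ 1 := fun h1 => by
        rw [eq_inv_of_mul_eq_one_left h1, cs.isRightDescent_inv_iff] at hx
        exact hy hx
      rw [H_mul_H_simple_of_isRightDescent ha hx, add_mul, map_add, smul_mul_assoc, map_smul, ih,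
        ih, if_neg hxy, smul_zero, add_zero, mul_assoc]
    · rw [H_mul_H_simple_of_not_isRightDescent ha hx, ih, mul_assoc]

noncomputable def reverse : A →ₗ[ℤ[T;T⁻¹]] A := ha.basisH.constr ℤ[T;T⁻¹] fun x => ha.H x⁻¹

@[simp]
theorem reverse_H (x : W) : ha.reverse (ha.H x) = ha.H x⁻¹ := by
  rw [reverse, ← basisH_apply, Module.Basis.constr_basis]

@[simp]
theorem reverse_one : ha.reverse 1 = 1 := by
  simpa using ha.reverse_H 1

theorem reverse_H_simple_mul (i : B) (b : A) :
    ha.reverse (ha.H (cs.simple i) * b) = ha.reverse b * ha.H (cs.simple i) := by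
  suffices ha.reverse ∘ₗ LinearMap.mulLeft ℤ[T;T⁻¹] (ha.H (cs.simple i)) =
      LinearMap.mulRight ℤ[T;T⁻¹] (ha.H (cs.simple i)) ∘ₗ ha.reverse from
    LinearMap.congr_fun this b
  refine ha.basisH.ext fun z => ?_
  simp only [LinearMap.comp_apply, LinearMap.mulLeft_apply, LinearMap.mulRight_apply,
    basisH_apply, reverse_H]
  by_cases hz : cs.IsLeftDescent z i
  · rw [H_simple_mul_H_of_isLeftDescent ha hz, H_mul_H_simple_of_isRightDescent ha
      (cs.isRightDescent_inv_iff.mpr hz), map_add, map_smul, reverse_H, reverse_H, mul_inv_rev,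
      cs.inv_simple]
  · rw [H_simple_mul_H_of_not_isLeftDescent ha hz, H_mul_H_simple_of_not_isRightDescent ha
      (mt cs.isRightDescent_inv_iff.mp hz), reverse_H, mul_inv_rev, cs.inv_simple]

theorem reverse_H_mul (x : W) (b : A) : ha.reverse (ha.H x * b) = ha.reverse b * ha.H x⁻¹ := by
  induction x using cs.simple_induction_left_of_not_isLeftDescent generalizing b with
  | one => simp
  | mul_simple_left x i hx ih =>
    rw [← ha.H_simple_mul_H_of_not_isLeftDescent hx, mul_assoc, reverse_H_simple_mul, ih,
      mul_assoc, H_mul_H_simple_of_not_isRightDescent ha (mt cs.isRightDescent_inv_iff.mp hx),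
      mul_inv_rev, cs.inv_simple]

theorem reverse_mul (a b : A) : ha.reverse (a * b) = ha.reverse b * ha.reverse a := by
  suffices ha.reverse ∘ₗ LinearMap.mulRight ℤ[T;T⁻¹] b =
      LinearMap.mulLeft ℤ[T;T⁻¹] (ha.reverse b) ∘ₗ ha.reverse from
    LinearMap.congr_fun this a
  refine ha.basisH.ext fun x => ?_
  simp [reverse_H_mul]

theorem form_eq_tau_reverse_mul {Bf : A →ₗ[ℤ[T;T⁻¹]] A →ₗ[ℤ[T;T⁻¹]] ℤ[T;T⁻¹]}
    (hBf : ∀ x y : W, Bf (ha.H x) (ha.H y) = if x = y then 1 else 0) (a b : A) :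
    Bf a b = ha.tau (ha.reverse a * b) := by
  suffices Bf = (LinearMap.mul ℤ[T;T⁻¹] A ∘ₗ ha.reverse).compr₂ ha.tau from
    LinearMap.congr_fun₂ this a b
  refine LinearMap.ext_basis ha.basisH ha.basisH fun x y => ?_
  simp [hBf, tau_H_mul_H, inv_mul_eq_one]

theorem form_H_right {Bf : A →ₗ[ℤ[T;T⁻¹]] A →ₗ[ℤ[T;T⁻¹]] ℤ[T;T⁻¹]}
    (hBf : ∀ x y : W, Bf (ha.H x) (ha.H y) = if x = y then 1 else 0) (a : A) (y : W) :
    Bf a (ha.H y) = ha.basisH.repr a y := by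
  suffices Bf.flip (ha.H y) = ha.basisH.coord y from LinearMap.congr_fun this a
  refine ha.basisH.ext fun x => ?_
  rw [LinearMap.flip_apply, Module.Basis.coord_apply, Module.Basis.repr_self, basisH_apply, hBf,
    Finsupp.single_apply]

theorem addMonoidHom_ext {N : Type*} [AddCommMonoid N] [Module ℤ[T;T⁻¹] N]
    {σ : ℤ[T;T⁻¹] → ℤ[T;T⁻¹]} {F G : A →+ N} (hF : ∀ (p : ℤ[T;T⁻¹]) a, F (p • a) = σ p • F a)
    (hG : ∀ (p : ℤ[T;T⁻¹]) a, G (p • a) = σ p • G a) (h : ∀ x, F (ha.H x) = G (ha.H x)) :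
    F = G := by
  ext a
  rw [← ha.basisH.linearCombination_repr a, Finsupp.linearCombination_apply, map_finsuppSum,
    map_finsuppSum]
  exact Finsupp.sum_congr fun x _ => by rw [hF, hG, basisH_apply, h]

namespace Bar

variable {ha} (bar : ha.Bar)

theorem d_algebraMap (p : ℤ[T;T⁻¹]) :
    bar.d (algebraMap ℤ[T;T⁻¹] A p) = algebraMap ℤ[T;T⁻¹] A (invert p) := by
  induction p using LaurentPolynomial.induction_on' with
  | add p q hp hq => simp only [map_add, hp, hq]
  | C_mul_T n a =>
    rw [map_mul, map_mul, map_mul, bar.d_scalar, invert_C, invert_T, eq_intCast C, map_intCast,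
      map_intCast, map_mul, map_intCast]

theorem d_smul (p : ℤ[T;T⁻¹]) (a : A) : bar.d (p • a) = invert p • bar.d a := by
  rw [Algebra.smul_def, map_mul, d_algebraMap, Algebra.smul_def]

theorem d_d_H (x : W) : bar.d (bar.d (ha.H x)) = ha.H x := by
  have h := congrArg bar.d (bar.d_H_mul x)
  rw [map_mul, map_one] at h
  exact left_inv_eq_right_inv h (by simpa using bar.d_H_mul x⁻¹)

end Bar

theorem reverse_d (bar : ha.Bar) (a : A) : ha.reverse (bar.d a) = bar.d (ha.reverse a) := by
  suffices ha.reverse.toAddMonoidHom.comp bar.d.toAddMonoidHom =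
      bar.d.toAddMonoidHom.comp ha.reverse.toAddMonoidHom from DFunLike.congr_fun this a
  refine ha.addMonoidHom_ext (σ := invert) (fun p a => ?_) (fun p a => ?_) fun x => ?_
  · simp [bar.d_smul]
  · simp [bar.d_smul]
  · -- both sides are inverse to `H_x`
    have hinv : ha.reverse (bar.d (ha.H x)) * ha.H x = 1 := by
      simpa [reverse_mul] using congrArg ha.reverse (bar.d_H_mul' x)
    simpa using left_inv_eq_right_inv hinv (by simpa using bar.d_H_mul' x⁻¹)

theorem tau_H_mul_H_mul_d (bar : ha.Bar) {w₀ : W} (hw₀ : ∀ u, cs.length u ≤ cs.length w₀)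
    (h : A) : ha.tau (ha.H w₀ * ha.H w₀ * bar.d h) = invert (ha.tau h) := by
  suffices (ha.tau.toAddMonoidHom.comp (AddMonoidHom.mulLeft (ha.H w₀ * ha.H w₀))).comp
      bar.d.toAddMonoidHom = (invert : ℤ[T;T⁻¹] ≃ₐ[ℤ] ℤ[T;T⁻¹]).toAddMonoidHom.comp
        ha.tau.toAddMonoidHom from DFunLike.congr_fun this h
  refine ha.addMonoidHom_ext (σ := invert) (fun p a => ?_) (fun p a => ?_) fun x => ?_
  · simp [bar.d_smul]
  · simp
  · have hfactor : ha.H (w₀ * x) * ha.H x⁻¹ = ha.H w₀ := by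
      rw [ha.H_mul_H (by rw [mul_inv_cancel_right,
        cs.length_add_length_of_mul_eq hw₀ (mul_inv_cancel_right w₀ x)]), mul_inv_cancel_right]
    have hcancel : ha.H w₀ * bar.d (ha.H x) = ha.H (w₀ * x) := by
      rw [← hfactor, mul_assoc, bar.d_H_mul', mul_one]
    simp [mul_assoc, hcancel, tau_H_mul_H, tau_H, ← mul_assoc w₀,
      cs.mul_self_eq_one_of_forall_length_le hw₀]

theorem eq_zero_of_forall_form_eq_zero {Bf : A →ₗ[ℤ[T;T⁻¹]] A →ₗ[ℤ[T;T⁻¹]] ℤ[T;T⁻¹]}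
    (hBf : ∀ x y : W, Bf (ha.H x) (ha.H y) = if x = y then 1 else 0) {C : W → A}
    (hC : ∀ y, ∃ f : W →₀ ℤ[T;T⁻¹], (∀ z, IsVPol (f z)) ∧
      C y = ha.H y + f.sum fun z r => r • ha.H z)
    {a : A} (h : ∀ y, Bf a (C y) = 0) : a = 0 := by
  choose f hf hC using hC
  have hrepr : ha.basisH.repr a = 0 := eq_zero_of_unitriangular_isVPol hf fun y => by
    rw [← h y, hC y, map_add, map_finsuppSum, form_H_right ha hBf]
    simp [form_H_right ha hBf]
  simpa using hrepr

end HeckeAlg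

theorem stmt17_general {B W : Type*} [Group W] {M : CoxeterMatrix B}
    (cs : CoxeterSystem M W)
    (A : Type*) [Ring A] [Algebra (LaurentPolynomial ℤ) A] (ha : HeckeAlg cs A)
    (bar : ha.Bar) (w0 : W) (hw0 : ∀ x : W, cs.length x ≤ cs.length w0)
    (Bf : A →ₗ[LaurentPolynomial ℤ] A →ₗ[LaurentPolynomial ℤ] LaurentPolynomial ℤ)
    (hBf : ∀ x y : W, Bf (ha.H x) (ha.H y) = if x = y then 1 else 0)
    (C : W → A) (hC : ∀ z, ha.IsKL bar z (C z))
    (P : W → A) (hP : ∀ x y : W, Bf (P x) (C y) = if x = y then 1 else 0)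
    (x : W) :
    ∃ c : A, bar.d c = c ∧ P x = c * ha.H w0 := by
  have hw0_inv : w0⁻¹ = w0 :=
    inv_eq_of_mul_eq_one_right (cs.mul_self_eq_one_of_forall_length_le hw0)
  have hdH : bar.d (ha.H w0) * ha.H w0 = 1 := by simpa [hw0_inv] using bar.d_H_mul w0
  have hHd : ha.H w0 * bar.d (ha.H w0) = 1 := by simpa [hw0_inv] using bar.d_H_mul' w0
  have hkey : bar.d (P x) * (ha.H w0 * ha.H w0) = P x := by
    refine sub_eq_zero.mp (ha.eq_zero_of_forall_form_eq_zero hBf (fun z => (hC z).2) fun y => ?_)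
    rw [map_sub, LinearMap.sub_apply, sub_eq_zero]
    calc Bf (bar.d (P x) * (ha.H w0 * ha.H w0)) (C y)
        = ha.tau (ha.H w0 * ha.H w0 * bar.d (ha.reverse (P x) * C y)) := by
          rw [ha.form_eq_tau_reverse_mul hBf, reverse_mul, reverse_mul, reverse_H, hw0_inv,
            map_mul bar.d, (hC y).1, reverse_d, mul_assoc]
      _ = invert (Bf (P x) (C y)) := by
          rw [ha.tau_H_mul_H_mul_d bar hw0, ha.form_eq_tau_reverse_mul hBf]
      _ = Bf (P x) (C y) := by
          rw [hP]
          split_ifs <;> simp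
  refine ⟨P x * bar.d (ha.H w0), ?_, by rw [mul_assoc, hdH, mul_one]⟩
  calc bar.d (P x * bar.d (ha.H w0)) = bar.d (P x) * (ha.H w0 * ha.H w0) * bar.d (ha.H w0) := by
        rw [map_mul, bar.d_d_H, mul_assoc, mul_assoc, hHd, mul_one]
    _ = P x * bar.d (ha.H w0) := by rw [hkey]

/-- for finite `W` with longest element `w₀`, `P_x H_{w₀}⁻¹` is self-dual:
`P_x = C^x H_{w₀}` for some bar-invariant `C^x`. -/
theorem stmt17 {B W : Type*} [Group W] [Fintype W] {M : CoxeterMatrix B}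
    (cs : CoxeterSystem M W)
    (A : Type*) [Ring A] [Algebra (LaurentPolynomial ℤ) A] (ha : HeckeAlg cs A)
    (bar : ha.Bar) (w0 : W) (hw0 : ∀ x : W, cs.length x ≤ cs.length w0)
    (Bf : A →ₗ[LaurentPolynomial ℤ] A →ₗ[LaurentPolynomial ℤ] LaurentPolynomial ℤ)
    (hBf : ∀ x y : W, Bf (ha.H x) (ha.H y) = if x = y then 1 else 0)
    (C : W → A) (hC : ∀ z, ha.IsKL bar z (C z))
    (P : W → A) (hP : ∀ x y : W, Bf (P x) (C y) = if x = y then 1 else 0)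
    (x : W) :
    ∃ c : A, bar.d c = c ∧ P x = c * ha.H w0 :=
  stmt17_general cs A ha bar w0 hw0 Bf hBf C hC P hP x
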